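/- Let λ₁ > 0, λ₂ > 0, α > 0 and θ ∈ [-1, 1], let D = λ₂α/(λ₁+λ₂α) + θλ₁·(2/(2λ₁+λ₂α) + 1/(λ₁+2λ₂α) - 2/(λ₁+λ₂α)), K = λ₁/D, let f^w(x) = K e^{-λ₁x}(1 - e^{-λ₂αx})(1 - θe^{-λ₂αx}(1 - 2e^{-λ₁x})) and F^w(x) = ∫₀^x f^w(t) dt. Then the hazard rate function h^w(x) = f^w(x)/(1 - F^w(x)) tends to 0 as x tends to 0 from the right. -/

import Mathlib

/-! The density vanishes at `0` through its factor `1 - e^{-λ₂αx}` and the cdf vanishes at `0`,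
so by continuity the hazard rate tends to `f^w(0) / (1 - F^w(0)) = 0`. -/

open MeasureTheory Filter Topology Real

theorem tendsto_div_one_sub_integral_of_continuous {f : ℝ → ℝ} (hf : Continuous f) (a : ℝ) :
    Tendsto (fun x => f x / (1 - ∫ t in a..x, f t)) (𝓝 a) (𝓝 (f a)) := by
  have hF : Continuous fun x => ∫ t in a..x, f t :=
    intervalIntegral.continuous_primitive (fun _ _ => hf.intervalIntegrable _ _) a
  have hden : Tendsto (fun x => 1 - ∫ t in a..x, f t) (𝓝 a) (𝓝 1) := by
    simpa using tendsto_const_nhds.sub (hF.tendsto a)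
  rw [← div_one (f a)]
  exact (hf.tendsto a).div hden one_ne_zero

theorem gwed_hazard_rate_limit_at_zero
    (l₁ l₂ α θ : ℝ)
    (K : ℝ)
    (fw Fw : ℝ → ℝ)
    (hfw : ∀ x : ℝ, fw x = K * Real.exp (-l₁ * x) * (1 - Real.exp (-l₂ * α * x))
        * (1 - θ * Real.exp (-l₂ * α * x) * (1 - 2 * Real.exp (-l₁ * x))))
    (hFw : ∀ x : ℝ, Fw x = ∫ t in (0 : ℝ)..x, fw t) :
    Tendsto (fun x => fw x / (1 - Fw x)) (nhdsWithin 0 (Set.Ioi 0)) (nhds 0) := by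
  have hcont : Continuous fw := by
    rw [funext hfw]
    fun_prop
  have hzero : fw 0 = 0 := by simp [hfw]
  have hlim := tendsto_div_one_sub_integral_of_continuous hcont 0
  simp only [hzero, ← hFw] at hlim
  exact hlim.mono_left nhdsWithin_le_nhds
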